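/- Let G = ℤ^m × F_n with m ≥ 1, n ≥ 2, and let H ≤ G be a finitely generated subgroup with r(Hπ) ≥ 2 and [ℤ^m : H ∩ ℤ^m] = ∞. Then di_G(H) = ∞: for every N there exists a finitely generated subgroup K_N ≤ G of rank 3 such that H ∩ K_N is finitely generated of reduced rank at least N. -/

import Mathlib

/-
Pick `b ∈ ℤ^m` whose powers meet `H ∩ ℤ^m` only trivially (`ℤ^m / (H ∩ ℤ^m)` is infinite and
finitely generated abelian, hence not torsion), put `t = (b, 1)`, which is central, and pick
`h₁, h₂ ∈ H` whose projections freely generate a free group of rank two. Then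
`K_M = ⟨h₁ t⁻¹, h₂, t^M⟩` (the paper's `K_N`, with `hᵢ = t^aᵢ uᵢ`) is the isomorphic image of
`F₂ × ℤ` under `(w, k) ↦ ψ(w) t^(M k - σ(w))`, where `ψ(w) = w(h₁, h₂)` and `σ` is the exponent
sum of the first generator. This element lies in `H` iff `M k = σ(w)`, so `H ∩ K_M` is the image
under `ψ` of the kernel of `σ mod M`. Mapping `F₂` to the lamplighter group `(ℤ/2)^(ℤ/M) ⋊ ℤ/M`
carries that kernel onto the base `(ℤ/2)^M`, so it needs at least `M` generators, while
`K_M ≅ F₂ × ℤ` has rank `3`.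
-/

noncomputable section

def grank {G : Type*} [Group G] (H : Subgroup G) : ℕ∞ :=
  ⨅ (S : Set G) (_ : Subgroup.closure S = H), S.encard

def rrank {G : Type*} [Group G] (H : Subgroup G) : ℕ∞ := grank H - 1

def erat (a b : ℕ∞) : ENNReal := if a = 0 ∧ b = 0 then 1 else (a : ENNReal) / (b : ENNReal)

def dc {G : Type*} [Group G] (H : Subgroup G) : ENNReal :=
  ⨆ (K : Subgroup G) (_ : K.FG ∧ H ≤ K), erat (rrank H) (rrank K)

def di {G : Type*} [Group G] (H : Subgroup G) : ENNReal :=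
  ⨆ (K : Subgroup G) (_ : K.FG ∧ (H ⊓ K).FG), erat (rrank (H ⊓ K)) (rrank K)

section GeneratorRank

variable {G G' : Type*} [Group G] [Group G']

theorem grank_closure_le (S : Set G) : grank (Subgroup.closure S) ≤ S.encard := by
  unfold grank
  exact iInf_le_of_le S (iInf_le_of_le rfl le_rfl)

theorem le_grank_iff {c : ℕ∞} {W : Subgroup G} :
    c ≤ grank W ↔ ∀ S : Set G, Subgroup.closure S = W → c ≤ S.encard :=
  le_iInf₂_iff

theorem grank_map_le (f : G →* G') (W : Subgroup G) : grank (W.map f) ≤ grank W := by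
  refine le_grank_iff.2 fun S hS => ?_
  calc grank (W.map f) = grank (Subgroup.closure (f '' S)) := by rw [← f.map_closure, hS]
    _ ≤ (f '' S).encard := grank_closure_le _
    _ ≤ S.encard := Set.encard_image_le _ _

theorem grank_top_le_of_surjective {f : G →* G'} (hf : Function.Surjective f) :
    grank (⊤ : Subgroup G') ≤ grank (⊤ : Subgroup G) := by
  simpa [← MonoidHom.range_eq_map, MonoidHom.range_eq_top.2 hf] using grank_map_le f ⊤

theorem grank_map_of_injective {f : G →* G'} (hf : Function.Injective f) (W : Subgroup G) :
    grank (W.map f) = grank W := by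
  refine le_antisymm (grank_map_le f W) (le_grank_iff.2 fun T hT => ?_)
  have hT_range : T ⊆ Set.range f := fun x hx => by
    obtain ⟨y, -, rfl⟩ := hT ▸ Subgroup.subset_closure hx
    exact ⟨y, rfl⟩
  have hclosure : Subgroup.closure (f ⁻¹' T) = W := by
    apply Subgroup.map_injective hf
    rw [f.map_closure, Set.image_preimage_eq_of_subset hT_range, hT]
  calc grank W ≤ (f ⁻¹' T).encard := hclosure ▸ grank_closure_le _
    _ = (f '' (f ⁻¹' T)).encard := (hf.injOn.encard_image).symm
    _ ≤ T.encard := Set.encard_mono (Set.image_preimage_subset f T)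

theorem le_rrank_of_add_one_le_grank {W : Subgroup G} {N : ℕ} (h : (N + 1 : ℕ∞) ≤ grank W) :
    (N : ℕ∞) ≤ rrank W :=
  ENat.le_sub_of_add_le_right ENat.one_ne_top h

end GeneratorRank

theorem Subgroup.FG.map {G G' : Type*} [Group G] [Group G'] {W : Subgroup G} (h : W.FG)
    (f : G →* G') : (W.map f).FG := by
  classical
  obtain ⟨S, hS⟩ := h
  exact ⟨S.image f, by rw [Finset.coe_image, ← MonoidHom.map_closure, hS]⟩

theorem fg_ker_of_finite {G Q : Type*} [Group G] [Group Q] [Group.FG G] [Finite Q]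
    (ρ : G →* Q) : ρ.ker.FG :=
  (Group.fg_iff_subgroup_fg _).1 (Subgroup.fg_of_index_ne_zero _)

section ElementaryAbelian

theorem finrank_le_grank_top {n : ℕ} [Fact (1 < n)] {V : Type*} [AddCommGroup V]
    [Module (ZMod n) V] :
    (Module.finrank (ZMod n) V : ℕ∞) ≤ grank (⊤ : Subgroup (Multiplicative V)) := by
  refine le_grank_iff.2 fun S hS => ?_
  rcases S.finite_or_infinite with hfin | hinf
  · set T : Set V := Multiplicative.ofAdd ⁻¹' S
    have hspan : Submodule.span (ZMod n) T = ⊤ := by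
      have hT : AddSubgroup.closure T = ⊤ := by
        rw [← Subgroup.toAddSubgroup'_closure, hS, OrderIso.map_top]
      refine eq_top_iff.2 fun v _ => ?_
      exact (AddSubgroup.closure_le (Submodule.span (ZMod n) T).toAddSubgroup).2
        Submodule.subset_span (hT ▸ AddSubgroup.mem_top v)
    have : Fintype T := (hfin.preimage Multiplicative.ofAdd.injective.injOn).fintype
    calc (Module.finrank (ZMod n) V : ℕ∞)
        = Module.finrank (ZMod n) (Submodule.span (ZMod n) T) := by rw [hspan, finrank_top]
      _ ≤ T.toFinset.card := by exact_mod_cast finrank_span_le_card T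
      _ = S.encard := (Set.encard_eq_coe_toFinset_card T).symm
  · rw [hinf.encard_eq]
    exact le_top

theorem card_le_grank_top_pi {ι : Type*} [Finite ι] :
    (Nat.card ι : ℕ∞) ≤ grank (⊤ : Subgroup (ι → Multiplicative (ZMod 2))) := by
  have := Fintype.ofFinite ι
  let e := MulEquiv.funMultiplicative ι (ZMod 2)
  calc (Nat.card ι : ℕ∞) = Module.finrank (ZMod 2) (ι → ZMod 2) := by
        rw [Module.finrank_fintype_fun_eq_card, Nat.card_eq_fintype_card]
    _ ≤ grank (⊤ : Subgroup (Multiplicative (ι → ZMod 2))) := finrank_le_grank_top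
    _ = grank (⊤ : Subgroup (ι → Multiplicative (ZMod 2))) := by
        rw [← grank_map_of_injective (f := e.toMonoidHom) e.injective, ← MonoidHom.range_eq_map,
          MonoidHom.range_eq_top.2 e.surjective]

theorem eq_top_of_mulSingle_mem {ι : Type*} [Finite ι] [DecidableEq ι]
    {B : Subgroup (ι → Multiplicative (ZMod 2))}
    (h : ∀ i : ι, Pi.mulSingle i (Multiplicative.ofAdd (1 : ZMod 2)) ∈ B) : B = ⊤ := by
  have := Fintype.ofFinite ι
  refine eq_top_iff.2 fun f _ => ?_
  rw [← Finset.univ_prod_mulSingle f]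
  refine Subgroup.prod_mem _ fun i _ => ?_
  have hfi : f i = Multiplicative.ofAdd 1 ^ (Multiplicative.toAdd (f i)).val := by
    rw [← ofAdd_nsmul, nsmul_one, ZMod.natCast_zmod_val, ofAdd_toAdd]
  rw [hfi, Pi.mulSingle_pow]
  exact pow_mem (h i) _

theorem card_add_one_le_grank_top_freeGroup_prod {α : Type*} [Finite α] :
    (Nat.card α + 1 : ℕ∞) ≤ grank (⊤ : Subgroup (FreeGroup α × Multiplicative ℤ)) := by
  classical
  let e : Option α → Option α → Multiplicative (ZMod 2) := fun i =>
    Pi.mulSingle i (Multiplicative.ofAdd 1)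
  let f : FreeGroup α × Multiplicative ℤ →* (Option α → Multiplicative (ZMod 2)) :=
    (FreeGroup.lift fun a => e (some a)).coprod (zpowersHom _ (e none))
  have hf : Function.Surjective f := by
    refine MonoidHom.range_eq_top.1 (eq_top_of_mulSingle_mem fun i => ?_)
    cases i with
    | none => exact ⟨(1, Multiplicative.ofAdd 1), by simp [f, e]⟩
    | some a => exact ⟨(FreeGroup.of a, 1), by simp [f, e]⟩
  calc (Nat.card α + 1 : ℕ∞) = Nat.card (Option α) := by
        rw [Finite.card_option]
        push_cast
        rfl
    _ ≤ grank (⊤ : Subgroup (Option α → Multiplicative (ZMod 2))) := card_le_grank_top_pi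
    _ ≤ _ := grank_top_le_of_surjective hf

end ElementaryAbelian

section KernelRank

open SemidirectProduct

theorem conj_inl_eq {N Q : Type*} [CommGroup N] [Group Q] {φ : Q →* MulAut N} (g : N ⋊[φ] Q)
    (n : N) : g * inl n * g⁻¹ = inl (φ g.right n) := by
  ext <;> simp [mul_comm]

theorem card_le_grank_ker {α Q : Type*} [Group Q] [Finite Q] {ρ : FreeGroup α →* Q}
    (hρ : Function.Surjective ρ) {x : α} (hx : ρ (FreeGroup.of x) = 1) :
    (Nat.card Q : ℕ∞) ≤ grank ρ.ker := by
  classical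
  -- In the lamplighter group `(ℤ/2)^Q ⋊ Q`, conjugating the lamp `δ` at `1` by `ρ' w` moves it
  -- to `ρ w`; hence `ρ'` maps `ker ρ` onto the base group.
  let δ : Q → Multiplicative (ZMod 2) := Pi.mulSingle 1 (Multiplicative.ofAdd 1)
  let ρ' : FreeGroup α →* (Q → Multiplicative (ZMod 2)) ⋊[mulAutArrow] Q :=
    FreeGroup.lift fun y => if y = x then inl δ else inr (ρ (FreeGroup.of y))
  have hright : rightHom.comp ρ' = ρ := FreeGroup.ext_hom _ _ fun y => by
    by_cases hy : y = x
    · subst hy; simp [ρ', hx]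
    · simp [ρ', hy]
  have hsub : ρ.ker.map ρ' ≤ inl.range := by
    rintro _ ⟨w, hw, rfl⟩
    rw [range_inl_eq_ker_rightHom, MonoidHom.mem_ker, ← MonoidHom.comp_apply, hright]
    exact hw
  have hsingle (q : Q) : Pi.mulSingle q (Multiplicative.ofAdd 1) ∈ (ρ.ker.map ρ').comap inl := by
    obtain ⟨w, rfl⟩ := hρ q
    have hconj : w * FreeGroup.of x * w⁻¹ ∈ ρ.ker := by simp [hx]
    have hx' : ρ' (FreeGroup.of x) = inl δ := by simp [ρ']
    have hw : (ρ' w).right = ρ w := DFunLike.congr_fun hright w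
    refine ⟨_, hconj, ?_⟩
    rw [map_mul, map_mul, map_inv, hx', conj_inl_eq, hw]
    congr 1
    funext a
    change δ ((ρ w)⁻¹ * a) = _
    simp [δ, Pi.mulSingle_apply, inv_mul_eq_one, eq_comm (a := a)]
  have hbase : ρ.ker.map ρ' = (⊤ : Subgroup (Q → Multiplicative (ZMod 2))).map inl := by
    rw [← eq_top_of_mulSingle_mem hsingle, Subgroup.map_comap_eq, inf_eq_right.2 hsub]
  calc (Nat.card Q : ℕ∞) ≤ grank (⊤ : Subgroup (Q → Multiplicative (ZMod 2))) :=
        card_le_grank_top_pi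
    _ = grank (ρ.ker.map ρ') := by rw [hbase, grank_map_of_injective inl_injective]
    _ ≤ grank ρ.ker := grank_map_le _ _

end KernelRank

section ExponentSum

def exponentSumFst : FreeGroup (Fin 2) →* Multiplicative ℤ :=
  FreeGroup.lift ![Multiplicative.ofAdd 1, 1]

def exponentSumMod (M : ℕ) : FreeGroup (Fin 2) →* Multiplicative (ZMod M) :=
  (Int.castAddHom (ZMod M)).toMultiplicative.comp exponentSumFst

variable {M : ℕ}

theorem mem_ker_exponentSumMod {w : FreeGroup (Fin 2)} :
    w ∈ (exponentSumMod M).ker ↔ (M : ℤ) ∣ (exponentSumFst w).toAdd :=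
  ZMod.intCast_zmod_eq_zero_iff_dvd _ _

theorem exponentSumMod_surjective : Function.Surjective (exponentSumMod M) := by
  intro q
  obtain ⟨k, hk⟩ := ZMod.intCast_surjective q.toAdd
  refine ⟨FreeGroup.of 0 ^ k, ?_⟩
  simp [exponentSumMod, exponentSumFst, hk]

theorem exponentSumMod_of_one : exponentSumMod M (FreeGroup.of 1) = 1 := by
  simp [exponentSumMod, exponentSumFst]

theorem le_grank_ker_exponentSumMod [NeZero M] :
    (M : ℕ∞) ≤ grank (exponentSumMod M).ker := by
  simpa using
    card_le_grank_ker (ρ := exponentSumMod M) exponentSumMod_surjective exponentSumMod_of_one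

end ExponentSum

theorem exists_injective_lift_of_two_le_grank {α : Type*} {P : Subgroup (FreeGroup α)}
    (h2 : 2 ≤ grank P) : ∃ u : Fin 2 → FreeGroup α, (∀ i, u i ∈ P) ∧
      Function.Injective (FreeGroup.lift u) := by
  let X := IsFreeGroup.Generators P
  let f : FreeGroup X →* FreeGroup α :=
    P.subtype.comp (IsFreeGroup.toFreeGroup P).symm.toMonoidHom
  have hf : Function.Injective f := P.subtype_injective.comp (MulEquiv.injective _)
  have hfP (y : FreeGroup X) : f y ∈ P := ((IsFreeGroup.toFreeGroup P).symm y).2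
  obtain ⟨i, j, hij⟩ : Nontrivial X := by
    by_contra hX
    have := not_nontrivial_iff_subsingleton.1 hX
    have hclosure : Subgroup.closure (Set.range (f ∘ FreeGroup.of)) = P := by
      have hlift : FreeGroup.lift (f ∘ FreeGroup.of) = f :=
        FreeGroup.ext_hom _ _ fun _ => by simp
      rw [← FreeGroup.range_lift_eq_closure, hlift, MonoidHom.range_comp,
        MonoidHom.range_eq_top.2 (MulEquiv.surjective _), ← MonoidHom.range_eq_map,
        Subgroup.range_subtype]
    have : grank P ≤ 1 := by
      calc grank P ≤ (Set.range (f ∘ FreeGroup.of)).encard := hclosure ▸ grank_closure_le _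
        _ ≤ 1 := Set.encard_le_one_iff.2 fun _ _ ⟨x, hx⟩ ⟨y, hy⟩ => by
          rw [← hx, ← hy, Subsingleton.elim x y]
    exact absurd (h2.trans this) (by decide)
  refine ⟨![f (FreeGroup.of i), f (FreeGroup.of j)], fun k => by fin_cases k <;> exact hfP _, ?_⟩
  have hlift : FreeGroup.lift ![f (FreeGroup.of i), f (FreeGroup.of j)] =
      f.comp (FreeGroup.map ![i, j]) :=
    FreeGroup.ext_hom _ _ fun k => by fin_cases k <;> simp
  rw [hlift, MonoidHom.coe_comp]
  refine hf.comp (FreeGroup.map_injective fun a b hab => ?_)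
  fin_cases a <;> fin_cases b <;> simp_all [eq_comm]

theorem exists_mem_injective_comp_lift {α G : Type*} [Group G] {H : Subgroup G}
    {π : G →* FreeGroup α} (h2 : 2 ≤ grank (H.map π)) :
    ∃ h₁ ∈ H, ∃ h₂ ∈ H, Function.Injective (π.comp (FreeGroup.lift ![h₁, h₂])) := by
  obtain ⟨u, hu, hinj⟩ := exists_injective_lift_of_two_le_grank h2
  obtain ⟨h₁, h₁H, hπ₁⟩ := hu 0
  obtain ⟨h₂, h₂H, hπ₂⟩ := hu 1
  refine ⟨h₁, h₁H, h₂, h₂H, ?_⟩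
  convert hinj
  exact FreeGroup.ext_hom _ _ fun i => by fin_cases i <;> simp [hπ₁, hπ₂]

theorem exists_zpow_mem_imp_eq_zero_of_index_eq_zero {A : Type*} [CommGroup A] [Group.FG A]
    {C : Subgroup A} (hC : C.index = 0) : ∃ b : A, ∀ j : ℤ, b ^ j ∈ C → j = 0 := by
  have hinf := Subgroup.index_eq_zero_iff_infinite.1 hC
  obtain ⟨q, hq⟩ : ∃ q : A ⧸ C, ¬IsOfFinOrder q := by
    by_contra! htors
    have := CommGroup.finite_of_fg_isMulTorsion (A ⧸ C) htors
    exact not_finite (A ⧸ C)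
  obtain ⟨b, rfl⟩ := QuotientGroup.mk_surjective q
  refine ⟨b, fun j hj => injective_zpow_iff_not_isOfFinOrder.2 hq ?_⟩
  simpa [← QuotientGroup.mk_zpow, QuotientGroup.eq_one_iff] using hj

section TwistedProduct

variable {G Q : Type*} [Group G] [Group Q] {t h₁ h₂ : G}

theorem lift_mul_zpow_of_mem_center {α : Type*} (f : α → G)
    (χ : FreeGroup α →* Multiplicative ℤ) (ht : t ∈ Subgroup.center G) (w : FreeGroup α) :
    FreeGroup.lift (fun a => f a * t ^ (χ (FreeGroup.of a)).toAdd) w =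
      FreeGroup.lift f w * t ^ (χ w).toAdd := by
  have hcomm (u : FreeGroup α) (k : Multiplicative ℤ) :
      Commute (FreeGroup.lift f u) (zpowersHom G t k) :=
    (show Commute _ t from Subgroup.mem_center_iff.1 ht _).zpow_right _
  have h := FreeGroup.ext_hom (FreeGroup.lift fun a => f a * t ^ (χ (FreeGroup.of a)).toAdd)
    (((FreeGroup.lift f).noncommCoprod (zpowersHom G t) hcomm).comp ((MonoidHom.id _).prod χ))
    fun a => by simp
  simpa using DFunLike.congr_fun h w

def twistedProdHom (h₁ h₂ : G) (ht : t ∈ Subgroup.center G) (M : ℕ) :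
    FreeGroup (Fin 2) × Multiplicative ℤ →* G :=
  (FreeGroup.lift ![h₁ * t⁻¹, h₂]).noncommCoprod (zpowersHom G (t ^ M))
    fun _ _ => by
      rw [zpowersHom_apply]
      exact ((show Commute _ t from Subgroup.mem_center_iff.1 ht _).pow_right M).zpow_right _

theorem twistedProdHom_apply (ht : t ∈ Subgroup.center G) (M : ℕ) (w : FreeGroup (Fin 2))
    (k : Multiplicative ℤ) :
    twistedProdHom h₁ h₂ ht M (w, k) =
      FreeGroup.lift ![h₁, h₂] w * t ^ (M * k.toAdd - (exponentSumFst w).toAdd) := by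
  have htwist : FreeGroup.lift ![h₁ * t⁻¹, h₂] =
      FreeGroup.lift fun a => ![h₁, h₂] a * t ^ (exponentSumFst⁻¹ (FreeGroup.of a)).toAdd := by
    congr 1
    funext a
    fin_cases a <;> simp [exponentSumFst]
  rw [twistedProdHom, MonoidHom.noncommCoprod_apply, htwist, lift_mul_zpow_of_mem_center _ _ ht,
    zpowersHom_apply, ← zpow_natCast, ← zpow_mul, mul_assoc, ← zpow_add]
  congr 2
  simp only [MonoidHom.inv_apply, toAdd_inv]
  ring

theorem range_twistedProdHom (ht : t ∈ Subgroup.center G) (M : ℕ) :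
    (twistedProdHom h₁ h₂ ht M).range = Subgroup.closure {h₁ * t⁻¹, h₂, t ^ M} := by
  rw [twistedProdHom, MonoidHom.noncommCoprod_range, FreeGroup.range_lift_eq_closure,
    Subgroup.range_zpowersHom, Subgroup.zpowers_eq_closure, ← Subgroup.closure_union]
  congr 1
  ext x
  simp only [Matrix.range_cons, Matrix.range_empty, Set.union_empty, Set.union_singleton,
    Set.mem_insert_iff, Set.mem_singleton_iff]
  tauto

theorem twistedProdHom_injective (ht : t ∈ Subgroup.center G) {M : ℕ} {π : G →* Q}
    (hπt : π t = 1) (hfree : Function.Injective (π.comp (FreeGroup.lift ![h₁, h₂])))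
    (htfin : ¬IsOfFinOrder t) (hM : M ≠ 0) : Function.Injective (twistedProdHom h₁ h₂ ht M) := by
  rw [injective_iff_map_eq_one]
  rintro ⟨w, k⟩ h
  rw [twistedProdHom_apply] at h
  obtain rfl : w = 1 := (injective_iff_map_eq_one _).1 hfree w <| by
    simpa [hπt] using congrArg π h
  have hk : (M : ℤ) * k.toAdd = 0 := injective_zpow_iff_not_isOfFinOrder.2 htfin <| by
    simpa using h
  simp only [mul_eq_zero, Nat.cast_eq_zero, hM, false_or] at hk
  exact Prod.ext rfl (by simpa using congrArg Multiplicative.ofAdd hk)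

theorem inf_range_twistedProdHom (ht : t ∈ Subgroup.center G) {M : ℕ} {H : Subgroup G}
    (htH : ∀ j : ℤ, t ^ j ∈ H → j = 0) (h₁H : h₁ ∈ H) (h₂H : h₂ ∈ H) :
    H ⊓ (twistedProdHom h₁ h₂ ht M).range =
      (exponentSumMod M).ker.map (FreeGroup.lift ![h₁, h₂]) := by
  have hψ (w : FreeGroup (Fin 2)) : FreeGroup.lift ![h₁, h₂] w ∈ H :=
    FreeGroup.range_lift_le (Set.range_subset_iff.2 fun i => by fin_cases i <;> assumption)
      ⟨w, rfl⟩
  have hmem (w : FreeGroup (Fin 2)) (k : Multiplicative ℤ) :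
      twistedProdHom h₁ h₂ ht M (w, k) ∈ H ↔ (M : ℤ) * k.toAdd = (exponentSumFst w).toAdd := by
    rw [twistedProdHom_apply, Subgroup.mul_mem_cancel_left H (hψ w)]
    refine ⟨fun h => sub_eq_zero.1 (htH _ h), fun h => ?_⟩
    rw [h, sub_self, zpow_zero]
    exact one_mem H
  have hψ_eq {w : FreeGroup (Fin 2)} {k : Multiplicative ℤ}
      (hk : (M : ℤ) * k.toAdd = (exponentSumFst w).toAdd) :
      twistedProdHom h₁ h₂ ht M (w, k) = FreeGroup.lift ![h₁, h₂] w := by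
    rw [twistedProdHom_apply, hk, sub_self, zpow_zero, mul_one]
  ext x
  constructor
  · rintro ⟨hxH, ⟨w, k⟩, rfl⟩
    have hk := (hmem w k).1 hxH
    exact ⟨w, mem_ker_exponentSumMod.2 ⟨k.toAdd, hk.symm⟩, (hψ_eq hk).symm⟩
  · rintro ⟨w, hw, rfl⟩
    obtain ⟨k, hk⟩ := mem_ker_exponentSumMod.1 hw
    have hk' : (M : ℤ) * (Multiplicative.ofAdd k).toAdd = (exponentSumFst w).toAdd := hk.symm
    exact ⟨hψ w, ⟨(w, Multiplicative.ofAdd k), hψ_eq hk'⟩⟩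

theorem exists_grank_eq_three_le_grank_inf (ht : t ∈ Subgroup.center G) {π : G →* Q}
    {H : Subgroup G} (hπt : π t = 1) (htH : ∀ j : ℤ, t ^ j ∈ H → j = 0) (h₁H : h₁ ∈ H)
    (h₂H : h₂ ∈ H) (hfree : Function.Injective (π.comp (FreeGroup.lift ![h₁, h₂])))
    (M : ℕ) [NeZero M] :
    ∃ K : Subgroup G, K.FG ∧ grank K = 3 ∧ (H ⊓ K).FG ∧ (M : ℕ∞) ≤ grank (H ⊓ K) := by
  classical
  have htfin : ¬IsOfFinOrder t := fun hfin => hfin.orderOf_pos.ne' <| by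
    exact_mod_cast htH (orderOf t) (by simp)
  have hΘ := twistedProdHom_injective ht hπt hfree htfin (NeZero.ne M)
  have hψ : Function.Injective (FreeGroup.lift ![h₁, h₂]) :=
    Function.Injective.of_comp (f := π) (by rwa [← MonoidHom.coe_comp])
  refine ⟨Subgroup.closure {h₁ * t⁻¹, h₂, t ^ M}, ⟨{h₁ * t⁻¹, h₂, t ^ M}, by simp⟩,
    le_antisymm ?_ ?_, ?_, ?_⟩
  · calc grank (Subgroup.closure {h₁ * t⁻¹, h₂, t ^ M}) ≤ _ := grank_closure_le _
      _ = (({h₁ * t⁻¹, h₂, t ^ M} : Finset G) : Set G).encard := by simp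
      _ ≤ 3 := by
        rw [Set.encard_coe_eq_coe_finsetCard]
        exact_mod_cast Finset.card_le_three
  · rw [← range_twistedProdHom ht, MonoidHom.range_eq_map, grank_map_of_injective hΘ]
    simpa [two_add_one_eq_three] using card_add_one_le_grank_top_freeGroup_prod (α := Fin 2)
  · rw [← range_twistedProdHom ht, inf_range_twistedProdHom ht htH h₁H h₂H]
    exact (fg_ker_of_finite _).map _
  · rw [← range_twistedProdHom ht, inf_range_twistedProdHom ht htH h₁H h₂H,
      grank_map_of_injective hψ]
    exact le_grank_ker_exponentSumMod

end TwistedProduct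

theorem di_eq_top_of_forall_le_rrank {G : Type*} [Group G] {H : Subgroup G} (c : ℕ)
    (h : ∀ N : ℕ, ∃ K : Subgroup G,
      K.FG ∧ rrank K ≤ c ∧ (H ⊓ K).FG ∧ (N : ℕ∞) ≤ rrank (H ⊓ K)) :
    di H = ⊤ := by
  refine ENNReal.eq_top_of_forall_nnreal_le fun r => ?_
  obtain ⟨N, hN⟩ := exists_nat_ge r
  obtain ⟨K, hK, hKc, hHK, hle⟩ := h (N * c + 1)
  have hdi : erat (rrank (H ⊓ K)) (rrank K) ≤ di H :=
    le_iSup₂ (f := fun K (_ : K.FG ∧ (H ⊓ K).FG) => erat (rrank (H ⊓ K)) (rrank K)) K ⟨hK, hHK⟩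
  have hpos : rrank (H ⊓ K) ≠ 0 := (lt_of_lt_of_le (by simp) hle).ne'
  have hKtop : rrank K ≠ ⊤ := ne_top_of_le_ne_top (ENat.natCast_ne_top c) hKc
  have hmul : (N : ℕ∞) * rrank K ≤ rrank (H ⊓ K) :=
    calc (N : ℕ∞) * rrank K ≤ N * c := by gcongr
      _ ≤ ((N * c + 1 : ℕ) : ℕ∞) := by exact_mod_cast Nat.le_succ _
      _ ≤ rrank (H ⊓ K) := hle
  refine le_trans ?_ hdi
  rw [erat, if_neg (by simp [hpos])]
  calc (r : ENNReal) ≤ N := by exact_mod_cast hN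
    _ ≤ _ := (ENNReal.le_div_iff_mul_le (Or.inr (by simpa using hpos))
        (Or.inl (by simpa using hKtop))).2 (by exact_mod_cast hmul)

theorem di_infinite_of_infinite_index_general {m n : ℕ}
    (H : Subgroup (Multiplicative (Fin m → ℤ) × FreeGroup (Fin n)))
    (h2 : 2 ≤ grank (H.map (MonoidHom.snd (Multiplicative (Fin m → ℤ)) (FreeGroup (Fin n)))))
    (hinf : (H.comap (MonoidHom.inl (Multiplicative (Fin m → ℤ)) (FreeGroup (Fin n)))).index = 0) :
    di H = ⊤ ∧
    ∀ N : ℕ, ∃ K : Subgroup (Multiplicative (Fin m → ℤ) × FreeGroup (Fin n)),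
      K.FG ∧ grank K = 3 ∧ (H ⊓ K).FG ∧ (N : ℕ∞) ≤ rrank (H ⊓ K) := by
  obtain ⟨b, hb⟩ := exists_zpow_mem_imp_eq_zero_of_index_eq_zero hinf
  let t := MonoidHom.inl (Multiplicative (Fin m → ℤ)) (FreeGroup (Fin n)) b
  have ht : t ∈ Subgroup.center _ :=
    Subgroup.mem_center_iff.2 fun g => Prod.ext (mul_comm _ _) (by simp [t])
  have htH (j : ℤ) (hj : t ^ j ∈ H) : j = 0 := hb j (by simpa [t] using hj)
  obtain ⟨h₁, h₁H, h₂, h₂H, hfree⟩ := exists_mem_injective_comp_lift h2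
  have hK (N : ℕ) : ∃ K : Subgroup (Multiplicative (Fin m → ℤ) × FreeGroup (Fin n)),
      K.FG ∧ grank K = 3 ∧ (H ⊓ K).FG ∧ (N : ℕ∞) ≤ rrank (H ⊓ K) := by
    obtain ⟨K, hK, h3, hHK, hN⟩ :=
      exists_grank_eq_three_le_grank_inf ht (by simp [t]) htH h₁H h₂H hfree (N + 1)
    exact ⟨K, hK, h3, hHK, le_rrank_of_add_one_le_grank (by exact_mod_cast hN)⟩
  refine ⟨di_eq_top_of_forall_le_rrank 2 fun N => ?_, hK⟩
  obtain ⟨K, hK, h3, hHK, hN⟩ := hK N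
  exact ⟨K, hK, by rw [rrank, h3]; norm_num, hHK, hN⟩

theorem di_infinite_of_infinite_index {m n : ℕ} (hm : 1 ≤ m) (hn : 2 ≤ n)
    (H : Subgroup (Multiplicative (Fin m → ℤ) × FreeGroup (Fin n))) (hH : H.FG)
    (h2 : 2 ≤ grank (H.map (MonoidHom.snd (Multiplicative (Fin m → ℤ)) (FreeGroup (Fin n)))))
    (hinf : (H.comap (MonoidHom.inl (Multiplicative (Fin m → ℤ)) (FreeGroup (Fin n)))).index = 0) :
    di H = ⊤ ∧
    ∀ N : ℕ, ∃ K : Subgroup (Multiplicative (Fin m → ℤ) × FreeGroup (Fin n)),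
      K.FG ∧ grank K = 3 ∧ (H ⊓ K).FG ∧ (N : ℕ∞) ≤ rrank (H ⊓ K) :=
  di_infinite_of_infinite_index_general H h2 hinf
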